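/- arXiv:0812.0027 — 6 statements merged into one kernel-verified Lean document; each statement's English description precedes it below -/
import Mathlib

section
/- (Kaluznin–Krasner) If H is a normal subgroup of G with quotient K = G/H, then G embeds into the permutational wreath product H ≀ K, where K acts on itself (as the coset space H\G) by right multiplication. -/
def wAct (A G S : Type*) [Group A] [Group G] (σ : S → G → S)
    (h1 : ∀ s, σ s 1 = s) (hm : ∀ s g g', σ (σ s g) g' = σ s (g * g')) :
    G →* MulAut (S → A) where
  toFun g :=
    { toFun := fun f s => f (σ s g)
      invFun := fun f s => f (σ s g⁻¹)
      left_inv := fun f => funext fun s => by dsimp only; rw [hm, inv_mul_cancel, h1]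
      right_inv := fun f => funext fun s => by dsimp only; rw [hm, mul_inv_cancel, h1]
      map_mul' := fun f f' => rfl }
  map_one' := by
    ext f s; exact congrArg f (h1 s)
  map_mul' g g' := by
    ext f s; exact congrArg f (hm s g g').symm

/-!
Choose a section `t` of `π : G → K` (for `K = G/H`, a transversal of `H`). For `g : G` and
`k : K`, the element `t k * g * (t (k * π g))⁻¹` lies in the kernel of `π`, and as a function of
`k` it satisfies the cocycle identity that makes `g ↦ (k ↦ t k * g * (t (k * π g))⁻¹, π g)` a
homomorphism into the wreath product. It is injective because `π g` and the coordinate at `k = 1`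
together recover `g`.
-/

namespace KaluzninKrasner

variable {G K : Type*} [Group G] [Group K]

def transversalCocycle (π : G →* K) (t : K → G) (g : G) (k : K) : G :=
  t k * g * (t (k * π g))⁻¹

theorem transversalCocycle_mem {π : G →* K} {t : K → G} {N : Subgroup G}
    (ht : Function.RightInverse t π) (hN : π.ker ≤ N) (g : G) (k : K) :
    transversalCocycle π t g k ∈ N :=
  hN <| by simp [MonoidHom.mem_ker, transversalCocycle, ht _]

theorem transversalCocycle_mul (π : G →* K) (t : K → G) (g g' : G) (k : K) :
    transversalCocycle π t (g * g') k =
      transversalCocycle π t g k * transversalCocycle π t g' (k * π g) := by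
  simp only [transversalCocycle, map_mul, mul_assoc, inv_mul_cancel_left]

theorem eq_of_transversalCocycle_eq {π : G →* K} {t : K → G} {a b : G} (hπ : π a = π b)
    (k : K) (h : transversalCocycle π t a k = transversalCocycle π t b k) : a = b := by
  rw [transversalCocycle, transversalCocycle, hπ] at h
  exact mul_left_cancel (mul_right_cancel h)

noncomputable def wreathEmbedding (π : G →* K) (t : K → G) (N : Subgroup G)
    (ht : Function.RightInverse t π) (hN : π.ker ≤ N) :
    G →* (K → N) ⋊[wAct N K K (fun s k => s * k) (fun s => mul_one s)
      (fun s g g' => mul_assoc s g g')] K :=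
  MonoidHom.mk' (fun g => ⟨fun k => ⟨_, transversalCocycle_mem ht hN g k⟩, π g⟩) fun g g' =>
    SemidirectProduct.ext (funext fun k => Subtype.ext (transversalCocycle_mul π t g g' k))
      (map_mul π g g')

theorem wreathEmbedding_injective (π : G →* K) (t : K → G) (N : Subgroup G)
    (ht : Function.RightInverse t π) (hN : π.ker ≤ N) :
    Function.Injective (wreathEmbedding π t N ht hN) := fun _ _ h =>
  eq_of_transversalCocycle_eq (congrArg SemidirectProduct.right h) 1
    (congrArg (fun x => (x.left 1 : G)) h)

end KaluzninKrasner

open KaluzninKrasner in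
/-- Kaluznin–Krasner: if `H ⊴ G` with quotient `K = G/H`, then `G` embeds in
the permutational wreath product `H ≀ K = H^K ⋊ K`, where `K` acts on itself by right
multiplication. -/
theorem kaluznin_krasner (G : Type) [Group G] (H : Subgroup G) [H.Normal] :
    ∃ φ : G →* (G ⧸ H → H)
        ⋊[wAct H (G ⧸ H) (G ⧸ H) (fun s k => s * k) (fun s => mul_one s)
            (fun s g g' => mul_assoc s g g')] (G ⧸ H),
      Function.Injective φ :=
  ⟨wreathEmbedding (QuotientGroup.mk' H) Quotient.out H QuotientGroup.out_eq'
      (QuotientGroup.ker_mk' H).le,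
    wreathEmbedding_injective _ _ _ _ _⟩
end

section
/- Let F be a free group on a set X and H a subgroup. Then there exists a Schreier transversal for H in F, i.e., a right transversal T of H consisting of reduced words over X ∪ X^{-1} that is closed under taking prefixes. -/
/-! Order the free group by the shortlex order of reduced words, the letters being well-ordered
arbitrarily. This is a well-order, so the least elements of the right cosets of `H` form a right
transversal. It is prefix-closed: if `t = l s` is reduced and some `v` in `H l` precedes `l`, then
`v s` lies in `H t`, and its reduced word, a sublist of `v ++ s`, precedes `l ++ s`. -/

namespace List

variable {α : Type*} {r : α → α → Prop}

theorem Lex.append_of_length_eq {s₁ s₂ : List α} (h : Lex r s₁ s₂)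
    (hlen : s₁.length = s₂.length) (t₁ t₂ : List α) : Lex r (s₁ ++ t₁) (s₂ ++ t₂) := by
  induction h with
  | nil => simp at hlen
  | cons _ ih => exact .cons (ih (by simpa using hlen))
  | rel h => exact .rel h

theorem Shortlex.append_same_right {s₁ s₂ : List α} (h : Shortlex r s₁ s₂) (t : List α) :
    Shortlex r (s₁ ++ t) (s₂ ++ t) := by
  rcases shortlex_def.mp h with hlt | ⟨hlen, hlex⟩
  · exact of_length_lt (by simpa using hlt)
  · exact of_lex (by simp [hlen]) (hlex.append_of_length_eq hlen t t)

theorem Shortlex.of_sublist_left {s₁ s₂ t : List α} (hs : s₁ <+ s₂) (h : Shortlex r s₂ t) :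
    Shortlex r s₁ t := by
  rcases hs.length_le.lt_or_eq with hlt | hlen
  · have : s₂.length ≤ t.length := by
      rcases shortlex_def.mp h with h | h
      exacts [h.le, h.1.le]
    exact of_length_lt (hlt.trans_le this)
  · rwa [hs.eq_of_length hlen]

end List

namespace Subgroup

variable {G : Type*} [Group G] (H : Subgroup G) (R : G → G → Prop)

def rightCosetMinima : Set G := {w | ∀ v, w * v⁻¹ ∈ H → ¬ R v w}

variable {H R}

theorem existsUnique_mem_rightCosetMinima (hwf : WellFounded R) [Std.Trichotomous R] (g : G) :
    ∃! t, t ∈ H.rightCosetMinima R ∧ g * t⁻¹ ∈ H := by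
  have hne : {w | g * w⁻¹ ∈ H}.Nonempty := ⟨g, by simp [H.one_mem]⟩
  set m := hwf.min _ hne
  have hgm : g * m⁻¹ ∈ H := hwf.min_mem _ hne
  have hm_min : ∀ v, m * v⁻¹ ∈ H → ¬ R v m := fun v hv =>
    hwf.not_lt_min {w | g * w⁻¹ ∈ H} (x := v) (by simpa [mul_assoc] using H.mul_mem hgm hv)
  refine ⟨m, ⟨hm_min, hgm⟩, fun t ⟨ht, hgt⟩ => ?_⟩
  have hmt : m * t⁻¹ ∈ H := by simpa [mul_assoc] using H.mul_mem (H.inv_mem hgm) hgt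
  have htm : t * m⁻¹ ∈ H := by simpa using H.inv_mem hmt
  exact Std.Trichotomous.trichotomous t m (hm_min t hmt) (ht m htm)

end Subgroup

namespace FreeGroup

variable {α : Type*} [DecidableEq α]

theorem toWord_mk_of_isInfix {l : List (α × Bool)} {x : FreeGroup α} (h : l <:+: x.toWord) :
    (mk l).toWord = l := by
  rw [toWord_mk, (isReduced_toWord.infix h).reduce_eq]

theorem mk_mem_rightCosetMinima_of_isPrefix {r : α × Bool → α × Bool → Prop}
    {H : Subgroup (FreeGroup α)} {t : FreeGroup α}
    (ht : t ∈ H.rightCosetMinima (InvImage (List.Shortlex r) toWord))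
    {l : List (α × Bool)} (hl : l <+: t.toWord) :
    mk l ∈ H.rightCosetMinima (InvImage (List.Shortlex r) toWord) := by
  obtain ⟨s, hls⟩ := hl
  have hs : (mk s).toWord = s := toWord_mk_of_isInfix ⟨l, [], by simpa using hls⟩
  have ht_eq : t = mk l * mk s := by rw [mul_mk, hls, mk_toWord]
  intro v hv hvl
  refine ht (v * mk s) (by rwa [ht_eq, mul_inv_rev, ← mul_assoc, mul_inv_cancel_right]) ?_
  have hsub : (v * mk s).toWord.Sublist (v.toWord ++ s) := by
    simpa only [hs] using toWord_mul_sublist v (mk s)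
  have hvl' : List.Shortlex r v.toWord l := toWord_mk_of_isInfix ⟨[], s, by simpa using hls⟩ ▸ hvl
  show List.Shortlex r _ _
  rw [← hls]
  exact List.Shortlex.of_sublist_left hsub (hvl'.append_same_right s)

end FreeGroup

/-- every subgroup `H` of a free group `F` on `X` admits a Schreier
transversal: a right transversal of `H` (meeting each right coset `Hw` in exactly one
element) that is closed under taking prefixes of reduced words. -/
theorem schreier_transversal_exists (X : Type) [DecidableEq X] (H : Subgroup (FreeGroup X)) :
    ∃ T : Set (FreeGroup X),
      (∀ g : FreeGroup X, ∃! t, t ∈ T ∧ g * t⁻¹ ∈ H) ∧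
      (∀ t ∈ T, ∀ l : List (X × Bool), l <+: FreeGroup.toWord t → FreeGroup.mk l ∈ T) := by
  let R := InvImage (List.Shortlex (WellOrderingRel (α := X × Bool))) FreeGroup.toWord
  have hwf : WellFounded R := InvImage.wf _ (List.Shortlex.wf WellOrderingRel.isWellOrder.wf)
  have : Std.Trichotomous R := InvImage.trichotomous FreeGroup.toWord_injective
  exact ⟨H.rightCosetMinima R, H.existsUnique_mem_rightCosetMinima hwf,
    fun _ ht _ hl => FreeGroup.mk_mem_rightCosetMinima_of_isPrefix ht hl⟩
end

section
/- Let F be a free group on X, H ≤ F, and T a Schreier transversal for H with w̄ denoting the representative in T of the coset Hw. Then the set B = { t x (t̄x)^{-1} : t ∈ T, x ∈ X, t x (t̄x)^{-1} ≠ 1 } freely generates H; that is, H is a free group with basis B. -/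
/-!
A map `ψ` on the Schreier generators `t x (t̄x)⁻¹` is extended to a cocycle
`c : F → (H\F → K)`, `c (u v) q = c u q * c v (q u)`, by lifting `x ↦ (ψ (·, x), x)` into the
semidirect product `(H\F → K) ⋊ F`. Prefix-closedness of the transversal makes `c` vanish on it,
so `h ↦ c h H` is a homomorphism `H → K` sending `t x (t̄x)⁻¹` to `ψ (t, x)`. Conversely, every
homomorphism `γ : H → K` yields the cocycle `(w, Ht) ↦ γ (t w (t̄w)⁻¹)`, and a cocycle on a free
group is determined by its values on the generators; this gives uniqueness.
-/

open QuotientGroup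

namespace NielsenSchreier

section RightCosets

variable {G : Type*} [Group G] (H : Subgroup G)

abbrev RightCosets : Type _ := Quotient (rightRel H)

def act (g : G) : RightCosets H → RightCosets H :=
  Quotient.map' (· * g) fun a b hab => by
    rw [rightRel_apply] at hab ⊢
    simpa [mul_assoc] using hab

variable {H}

theorem act_mk (g a : G) : act H g (Quotient.mk'' a) = Quotient.mk'' (a * g) := rfl

theorem act_one (q : RightCosets H) : act H 1 q = q := by
  induction q using Quotient.inductionOn' with
  | h a => rw [act_mk, mul_one]

theorem act_mul (u v : G) (q : RightCosets H) : act H (u * v) q = act H v (act H u q) := by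
  induction q using Quotient.inductionOn' with
  | h a => rw [act_mk, act_mk, act_mk, mul_assoc]

theorem act_mk_one_of_mem {h : G} (hh : h ∈ H) :
    act H h (Quotient.mk'' 1) = (Quotient.mk'' 1 : RightCosets H) := by
  rw [act_mk, Quotient.eq'', rightRel_apply]
  simpa using hh

end RightCosets

section Cocycle

variable {G : Type*} [Group G] (H : Subgroup G) {K : Type*} [Group K]

def IsCocycle (f : G → RightCosets H → K) : Prop :=
  ∀ u v q, f (u * v) q = f u q * f v (act H u q)

variable {H}

namespace IsCocycle

variable {f : G → RightCosets H → K}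

theorem map_one (hf : IsCocycle H f) (q : RightCosets H) : f 1 q = 1 := by
  have h := hf 1 1 q
  rw [one_mul, act_one] at h
  exact left_eq_mul.mp h

theorem map_inv (hf : IsCocycle H f) (u : G) (q : RightCosets H) :
    f u⁻¹ q = (f u (act H u⁻¹ q))⁻¹ := by
  have h := hf u⁻¹ u q
  rw [inv_mul_cancel, hf.map_one] at h
  exact eq_inv_of_mul_eq_one_left h.symm

def toMonoidHom (hf : IsCocycle H f) : H →* K where
  toFun h := f h (Quotient.mk'' 1)
  map_one' := hf.map_one _
  map_mul' a b := by
    rw [Subgroup.coe_mul, hf, act_mk_one_of_mem a.2]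

theorem toMonoidHom_apply (hf : IsCocycle H f) (h : H) :
    hf.toMonoidHom h = f h (Quotient.mk'' 1) := rfl

theorem ext_freeGroup {X : Type*} {H : Subgroup (FreeGroup X)}
    {f g : FreeGroup X → RightCosets H → K} (hf : IsCocycle H f) (hg : IsCocycle H g)
    (h : ∀ x q, f (FreeGroup.of x) q = g (FreeGroup.of x) q) : f = g := by
  funext w
  induction w using FreeGroup.induction_on with
  | C1 => funext q; rw [hf.map_one, hg.map_one]
  | of x => funext q; exact h x q
  | inv_of x ih => funext q; rw [hf.map_inv, hg.map_inv, ih]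
  | mul u v ihu ihv => funext q; rw [hf, hg, ihu, ihv]

end IsCocycle

variable (H K) in
def precompAct : G →* MulAut (RightCosets H → K) where
  toFun g :=
    { toFun := fun k => k ∘ act H g
      invFun := fun k => k ∘ act H g⁻¹
      left_inv := fun k => by funext q; simp [← act_mul, act_one]
      right_inv := fun k => by funext q; simp [← act_mul, act_one]
      map_mul' := fun _ _ => rfl }
  map_one' := by ext k q; simp [act_one]
  map_mul' u v := by ext k q; simp [act_mul]

end Cocycle

section FreeGroup

variable {X : Type*} {H : Subgroup (FreeGroup X)} {K : Type*} [Group K]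

def cocycleLift (ψ : RightCosets H → X → K) :
    FreeGroup X →* (RightCosets H → K) ⋊[precompAct H K] FreeGroup X :=
  FreeGroup.lift fun x => ⟨fun q => ψ q x, FreeGroup.of x⟩

def cocycle (ψ : RightCosets H → X → K) (w : FreeGroup X) : RightCosets H → K :=
  (cocycleLift ψ w).left

theorem cocycleLift_right (ψ : RightCosets H → X → K) (w : FreeGroup X) :
    (cocycleLift ψ w).right = w := by
  have h : SemidirectProduct.rightHom.comp (cocycleLift ψ) = MonoidHom.id _ :=
    FreeGroup.ext_hom _ _ fun x => by simp [cocycleLift]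
  exact DFunLike.congr_fun h w

theorem isCocycle_cocycle (ψ : RightCosets H → X → K) : IsCocycle H (cocycle ψ) := by
  intro u v q
  simp only [cocycle, map_mul, SemidirectProduct.mul_left, Pi.mul_apply, cocycleLift_right]
  rfl

theorem cocycle_of (ψ : RightCosets H → X → K) (x : X) (q : RightCosets H) :
    cocycle ψ (FreeGroup.of x) q = ψ q x := by
  simp [cocycle, cocycleLift]

end FreeGroup

section Transversal

variable {G : Type*} [Group G] {H : Subgroup G} {s : RightCosets H → G}

variable (s) in
def schreierGen (q : RightCosets H) (g : G) : G :=
  s q * g * (s (act H g q))⁻¹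

theorem act_eq_mk_mul (hs : ∀ q, Quotient.mk'' (s q) = q) (g : G) (q : RightCosets H) :
    act H g q = Quotient.mk'' (s q * g) := by
  conv_lhs => rw [← hs q]
  rfl

theorem schreierGen_eq (hs : ∀ q, Quotient.mk'' (s q) = q) (q : RightCosets H) (g : G) :
    schreierGen s q g = s q * g * (s (Quotient.mk'' (s q * g)))⁻¹ := by
  rw [schreierGen, act_eq_mk_mul hs]

theorem schreierGen_mem (hs : ∀ q, Quotient.mk'' (s q) = q) (q : RightCosets H) (g : G) :
    schreierGen s q g ∈ H := by
  have h : (Quotient.mk'' (s (act H g q)) : RightCosets H) = Quotient.mk'' (s q * g) := by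
    rw [hs, act_eq_mk_mul hs]
  exact rightRel_apply.mp (Quotient.eq''.mp h)

theorem schreierGen_mul (q : RightCosets H) (u v : G) :
    schreierGen s q (u * v) = schreierGen s q u * schreierGen s (act H u q) v := by
  simp only [schreierGen, act_mul]
  group

theorem schreierGen_mk_one_of_mem (hs₁ : s (Quotient.mk'' 1) = 1) {h : G} (hh : h ∈ H) :
    schreierGen s (Quotient.mk'' 1) h = h := by
  rw [schreierGen, act_mk_one_of_mem hh, hs₁, one_mul, inv_one, mul_one]

theorem schreierGen_eq_one_of_mul_eq (hs : ∀ q, Quotient.mk'' (s q) = q) {q q' : RightCosets H}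
    {g : G} (h : s q * g = s q') : schreierGen s q g = 1 := by
  rw [schreierGen, act_eq_mk_mul hs, h, hs, mul_inv_cancel]

theorem isCocycle_schreierGen {K : Type*} [Group K] (hs : ∀ q, Quotient.mk'' (s q) = q)
    (γ : H →* K) :
    IsCocycle H fun g q => γ ⟨schreierGen s q g, schreierGen_mem hs q g⟩ := by
  intro u v q
  rw [← map_mul]
  exact congrArg γ (Subtype.ext (schreierGen_mul q u v))

theorem IsCocycle.apply_schreierGen {K : Type*} [Group K] {f : G → RightCosets H → K}
    (hf : IsCocycle H f) (hs : ∀ q, Quotient.mk'' (s q) = q)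
    (hfs : ∀ q, f (s q) (Quotient.mk'' 1) = 1) (q : RightCosets H) (g : G) :
    f (schreierGen s q g) (Quotient.mk'' 1) = f g q := by
  have hact : ∀ r, act H (s r) (Quotient.mk'' 1) = r := fun r => by rw [act_mk, one_mul, hs]
  have hinv : ∀ r, f (s r)⁻¹ r = 1 := fun r => by
    rw [hf.map_inv, act_eq_mk_mul hs, mul_inv_cancel, hfs, inv_one]
  rw [schreierGen, hf, hf, hfs, one_mul, hact, act_mul, hact, hinv, mul_one]

end Transversal

section SchreierTransversal

variable {X : Type*} {H : Subgroup (FreeGroup X)} {s : RightCosets H → FreeGroup X}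
  {K : Type*} [Group K] {f : FreeGroup X → RightCosets H → K}

theorem IsCocycle.apply_mk_singleton_eq_one (hf : IsCocycle H f)
    (hs : ∀ q, Quotient.mk'' (s q) = q)
    (hgen : ∀ q x, schreierGen s q (FreeGroup.of x) = 1 → f (FreeGroup.of x) q = 1)
    {q q' : RightCosets H} (y : X × Bool) (h : s q * FreeGroup.mk [y] = s q') :
    f (FreeGroup.mk [y]) q = 1 := by
  obtain ⟨x, _ | _⟩ := y
  · change f (FreeGroup.of x)⁻¹ q = 1
    change s q * (FreeGroup.of x)⁻¹ = s q' at h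
    have h' : s q' * FreeGroup.of x = s q := by rw [← h, inv_mul_cancel_right]
    rw [hf.map_inv, act_eq_mk_mul hs, h, hs, hgen q' x (schreierGen_eq_one_of_mul_eq hs h'),
      inv_one]
  · exact hgen q x (schreierGen_eq_one_of_mul_eq hs h)

theorem IsCocycle.eq_toMonoidHom_of_freeGroup (hf : IsCocycle H f)
    (hs : ∀ q, Quotient.mk'' (s q) = q) (hs₁ : s (Quotient.mk'' 1) = 1) (γ : H →* K)
    (hγ : ∀ x q, γ ⟨schreierGen s q (FreeGroup.of x), schreierGen_mem hs q _⟩ =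
      f (FreeGroup.of x) q) :
    γ = hf.toMonoidHom := by
  have hγf := (isCocycle_schreierGen hs γ).ext_freeGroup hf hγ
  ext h
  rw [IsCocycle.toMonoidHom_apply, ← congrFun (congrFun hγf h) (Quotient.mk'' 1)]
  exact congrArg γ (Subtype.ext (schreierGen_mk_one_of_mem hs₁ h.2).symm)

variable [DecidableEq X]

def IsPrefixClosed (s : RightCosets H → FreeGroup X) : Prop :=
  ∀ q, ∀ l : List (X × Bool), l <+: FreeGroup.toWord (s q) → ∃ q', s q' = FreeGroup.mk l

theorem IsPrefixClosed.apply_mk_one_eq_one (hs : ∀ q, Quotient.mk'' (s q) = q) (hpc : IsPrefixClosed s) :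
    s (Quotient.mk'' 1) = 1 := by
  obtain ⟨q, hq⟩ := hpc (Quotient.mk'' 1) [] List.nil_prefix
  have hq₁ : q = Quotient.mk'' 1 := by rw [← hs q, hq]; rfl
  rw [← hq₁, hq]
  rfl

/-- Induct along the prefixes of the reduced word of `s q`: each lies in the transversal, so every
letter contributes a trivial Schreier generator. -/
theorem IsCocycle.apply_transversal_eq_one (hf : IsCocycle H f)
    (hs : ∀ q, Quotient.mk'' (s q) = q) (hpc : IsPrefixClosed s)
    (hgen : ∀ q x, schreierGen s q (FreeGroup.of x) = 1 → f (FreeGroup.of x) q = 1)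
    (q : RightCosets H) : f (s q) (Quotient.mk'' 1) = 1 := by
  suffices ∀ l, l <+: FreeGroup.toWord (s q) → f (FreeGroup.mk l) (Quotient.mk'' 1) = 1 by
    simpa only [FreeGroup.mk_toWord] using this _ List.prefix_rfl
  intro l
  induction l using List.reverseRecOn with
  | nil => exact fun _ => hf.map_one _
  | append_singleton l y ih =>
    intro hl
    have hl' : l <+: FreeGroup.toWord (s q) := (List.prefix_append l [y]).trans hl
    obtain ⟨q₁, hq₁⟩ := hpc q l hl'
    obtain ⟨q₂, hq₂⟩ := hpc q (l ++ [y]) hl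
    rw [← FreeGroup.mul_mk, hf, ih hl', one_mul, ← hq₁, act_mk, one_mul, hs]
    exact hf.apply_mk_singleton_eq_one hs hgen (q' := q₂) y (by rw [hq₁, hq₂, FreeGroup.mul_mk])

end SchreierTransversal

end NielsenSchreier

open NielsenSchreier

/-- Nielsen–Schreier: if `T` is a Schreier transversal for `H ≤ F` (given by a
section `s` of the right coset space that is prefix-closed), then the set
`B = {t·x·(t̄x)⁻¹ ≠ 1 : t ∈ T, x ∈ X}` freely generates `H`: every map `B → K` into a group
extends uniquely to a homomorphism `H → K`. -/
theorem nielsen_schreier (X : Type) [DecidableEq X] (H : Subgroup (FreeGroup X))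
    (s : Quotient (QuotientGroup.rightRel H) → FreeGroup X)
    (hs : ∀ q, Quotient.mk'' (s q) = q)
    (hpc : ∀ q, ∀ l : List (X × Bool),
      l <+: FreeGroup.toWord (s q) → ∃ q', s q' = FreeGroup.mk l) :
    let B : Set H := {h : H | (h : FreeGroup X) ≠ 1 ∧
      ∃ (q : Quotient (QuotientGroup.rightRel H)) (x : X),
        (h : FreeGroup X) =
          s q * FreeGroup.of x * (s (Quotient.mk'' (s q * FreeGroup.of x)))⁻¹}
    ∀ (K : Type) [Group K] (φ : B → K), ∃! γ : H →* K, ∀ b : B, γ b = φ b := by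
  intro B K _ φ
  have hB : ∀ q x, schreierGen s q (FreeGroup.of x) ≠ 1 →
      (⟨_, schreierGen_mem hs q (FreeGroup.of x)⟩ : H) ∈ B :=
    fun q x h => ⟨h, q, x, schreierGen_eq hs q _⟩
  let ψ : RightCosets H → X → K := fun q x =>
    if h : schreierGen s q (FreeGroup.of x) = 1 then 1 else φ ⟨_, hB q x h⟩
  have hψ₁ : ∀ q x, schreierGen s q (FreeGroup.of x) = 1 → ψ q x = 1 := fun q x h => dif_pos h
  have hψ₂ : ∀ q x h, ψ q x = φ ⟨_, hB q x h⟩ := fun q x h => dif_neg h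
  have hc := isCocycle_cocycle ψ
  have hcs : ∀ q, cocycle ψ (s q) (Quotient.mk'' 1) = 1 :=
    hc.apply_transversal_eq_one hs hpc fun q x h => (cocycle_of ψ x q).trans (hψ₁ q x h)
  refine ⟨hc.toMonoidHom, ?_, fun γ hγ => ?_⟩
  · rintro ⟨b, hb, q, x, hbq⟩
    obtain rfl : b = ⟨_, schreierGen_mem hs q (FreeGroup.of x)⟩ :=
      Subtype.ext (hbq.trans (schreierGen_eq hs q _).symm)
    rw [IsCocycle.toMonoidHom_apply, hc.apply_schreierGen hs hcs, cocycle_of, hψ₂ q x hb]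
  · refine hc.eq_toMonoidHom_of_freeGroup hs (IsPrefixClosed.apply_mk_one_eq_one hs hpc) γ
      fun x q => ?_
    rw [cocycle_of]
    by_cases h : schreierGen s q (FreeGroup.of x) = 1
    · rw [hψ₁ q x h, ← map_one γ]; exact congrArg γ (Subtype.ext h)
    · rw [hψ₂ q x h]; exact hγ ⟨_, hB q x h⟩
end

section
/- Let F be a free group on X, H ≤ F with Schreier transversal T, and suppose b = t x (t̄x)^{-1} ∈ H is a nontrivial Schreier generator where t = x_1⋯x_{k-1} and (t̄x)^{-1} = x_{k+1}⋯x_n are reduced words over X ∪ X^{-1} and x_k = x. Setting t_i = x̄_1⋯x_i (the representative of H x_1⋯x_i), one has t_i = x_1⋯x_i for i < k and t_i = x_n^{-1}⋯x_{i+1}^{-1} for i > k. -/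
/-!
For `i < k`, `x₁⋯x_i` is a prefix of the reduced word of `t ∈ T`, hence lies in `T`.
For `i > k`, `x₁⋯x_i · x_{i+1}⋯x_n = b ∈ H`, so `x₁⋯x_i` and `x_n⁻¹⋯x_{i+1}⁻¹` lie in
the same right coset; the latter is a prefix of the reduced word of `t̄x ∈ T`, hence
lies in `T`.
-/

theorem Quotient.section_mk_of_mem_range {α : Type*} {r : Setoid α} (s : Quotient r → α)
    (hs : ∀ q, Quotient.mk'' (s q) = q) {a : α} (ha : a ∈ Set.range s) :
    s (Quotient.mk'' a) = a := by
  obtain ⟨q, rfl⟩ := ha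
  rw [hs]

namespace QuotientGroup

variable {G : Type*} [Group G] {H : Subgroup G}

theorem mul_inv_section_mem (s : Quotient (rightRel H) → G)
    (hs : ∀ q, Quotient.mk'' (s q) = q) (g : G) : g * (s (Quotient.mk'' g))⁻¹ ∈ H := by
  have h := hs (Quotient.mk'' g)
  rw [Quotient.eq''] at h
  exact rightRel_apply.mp h

theorem rightRel_mk_eq_mk_inv_of_mul_mem {a b : G} (h : a * b ∈ H) :
    (Quotient.mk'' a : Quotient (rightRel H)) = Quotient.mk'' b⁻¹ := by
  rw [Quotient.eq'', rightRel_apply, ← mul_inv_rev]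
  exact H.inv_mem h

end QuotientGroup

namespace FreeGroup

variable {X : Type*}

theorem invRev_drop (l : List (X × Bool)) (n : ℕ) :
    invRev (l.drop n) = (invRev l).take (l.length - n) := by
  simp only [invRev, List.map_drop, List.reverse_drop, List.length_map]

variable [DecidableEq X]

theorem invRev_drop_toWord_inv_prefix (w : FreeGroup X) (n : ℕ) :
    invRev ((toWord w⁻¹).drop n) <+: toWord w := by
  rw [invRev_drop, ← toWord_inv, inv_inv]
  exact List.take_prefix _ _

theorem section_mk_of_prefix {H : Subgroup (FreeGroup X)}
    {s : Quotient (QuotientGroup.rightRel H) → FreeGroup X}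
    (hs : ∀ q, Quotient.mk'' (s q) = q)
    (hpc : ∀ q, ∀ l : List (X × Bool),
      l <+: toWord (s q) → ∃ q', s q' = mk l)
    {q : Quotient (QuotientGroup.rightRel H)} {l : List (X × Bool)} (hl : l <+: toWord (s q)) :
    s (Quotient.mk'' (mk l)) = mk l :=
  Quotient.section_mk_of_mem_range s hs (hpc q l hl)

end FreeGroup

theorem schreier_transversal_formulas_general (X : Type) [DecidableEq X] (H : Subgroup (FreeGroup X))
    (s : Quotient (QuotientGroup.rightRel H) → FreeGroup X)
    (hs : ∀ q, Quotient.mk'' (s q) = q)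
    (hpc : ∀ q, ∀ l : List (X × Bool),
      l <+: FreeGroup.toWord (s q) → ∃ q', s q' = FreeGroup.mk l)
    (qt : Quotient (QuotientGroup.rightRel H)) (x : X) :
    let t := s qt
    let u := s (Quotient.mk'' (s qt * FreeGroup.of x))
    let L : List (X × Bool) := FreeGroup.toWord t ++ (x, true) :: FreeGroup.toWord u⁻¹
    let k := (FreeGroup.toWord t).length + 1
    ∀ i : ℕ,
      (i < k → s (Quotient.mk'' (FreeGroup.mk (L.take i))) = FreeGroup.mk (L.take i)) ∧
      (k < i → i ≤ L.length →
        s (Quotient.mk'' (FreeGroup.mk (L.take i))) = (FreeGroup.mk (L.drop i))⁻¹) := by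
  intro t u L k i
  have hL : L = (t.toWord ++ [(x, true)]) ++ u⁻¹.toWord := by simp [L]
  refine ⟨fun hik => ?_, fun hki _ => ?_⟩
  · rw [hL, List.append_assoc, List.take_append_of_le_length (by omega)]
    exact FreeGroup.section_mk_of_prefix hs hpc (List.take_prefix _ _)
  · have hdrop : L.drop i = u⁻¹.toWord.drop (i - k) := by
      have hlen : (t.toWord ++ [(x, true)]).length ≤ i := by
        simp only [List.length_append, List.length_singleton]; omega
      rw [hL, List.drop_append, List.drop_eq_nil_of_le hlen]
      simp [k]
    have hmkL : FreeGroup.mk L = t * FreeGroup.of x * u⁻¹ := by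
      rw [hL, ← FreeGroup.mul_mk, ← FreeGroup.mul_mk, FreeGroup.mk_toWord, FreeGroup.mk_toWord]
      rfl
    have hcoset : (Quotient.mk'' (FreeGroup.mk (L.take i)) : Quotient (QuotientGroup.rightRel H)) =
        Quotient.mk'' (FreeGroup.mk (L.drop i))⁻¹ := by
      apply QuotientGroup.rightRel_mk_eq_mk_inv_of_mul_mem
      rw [FreeGroup.mul_mk, List.take_append_drop, hmkL]
      exact QuotientGroup.mul_inv_section_mem s hs _
    rw [hcoset, FreeGroup.inv_mk, hdrop]
    exact FreeGroup.section_mk_of_prefix hs hpc (FreeGroup.invRev_drop_toWord_inv_prefix _ _)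

/-- let `T` be a Schreier transversal (given by a prefix-closed section `s`)
for `H ≤ F`, and let `b = t·x·(t̄x)⁻¹ ≠ 1` be a Schreier generator, written
`b = x₁⋯x_{k-1}·x_k·x_{k+1}⋯x_n` where `x₁⋯x_{k-1}` is the reduced word of `t`, `x_k = x` and
`x_{k+1}⋯x_n` is the reduced word of `(t̄x)⁻¹`.  With `t_i` the representative of
`H·x₁⋯x_i`, one has `t_i = x₁⋯x_i` for `i < k` and `t_i = x_n⁻¹⋯x_{i+1}⁻¹` for `i > k`. -/
theorem schreier_transversal_formulas (X : Type) [DecidableEq X] (H : Subgroup (FreeGroup X))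
    (s : Quotient (QuotientGroup.rightRel H) → FreeGroup X)
    (hs : ∀ q, Quotient.mk'' (s q) = q)
    (hpc : ∀ q, ∀ l : List (X × Bool),
      l <+: FreeGroup.toWord (s q) → ∃ q', s q' = FreeGroup.mk l)
    (qt : Quotient (QuotientGroup.rightRel H)) (x : X)
    (hb : s qt * FreeGroup.of x *
        (s (Quotient.mk'' (s qt * FreeGroup.of x)))⁻¹ ≠ 1) :
    let t := s qt
    let u := s (Quotient.mk'' (s qt * FreeGroup.of x))
    let L : List (X × Bool) := FreeGroup.toWord t ++ (x, true) :: FreeGroup.toWord u⁻¹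
    let k := (FreeGroup.toWord t).length + 1
    ∀ i : ℕ,
      (i < k → s (Quotient.mk'' (FreeGroup.mk (L.take i))) = FreeGroup.mk (L.take i)) ∧
      (k < i → i ≤ L.length →
        s (Quotient.mk'' (FreeGroup.mk (L.take i))) = (FreeGroup.mk (L.drop i))⁻¹) :=
  schreier_transversal_formulas_general X H s hs hpc qt x
end

section
/- Let G = ∗_{α∈A} G_α, H ≤ G, with a Kurosh system. If x ∈ G_α and H_i ⊆ H u G_α where u = α(HuG_α) is the chosen double coset representative, then y_{i,x} = α(H_i) x α(H_i x)^{-1} ∈ u G_α u^{-1} ∩ H. Conversely, every element h of u G_α u^{-1} ∩ H equals y_{Hu,x} for some x ∈ G_α. -/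
open Monoid

variable {ι : Type} [DecidableEq ι] (Gf : ι → Type) [∀ i, Group (Gf i)]
  [∀ i, DecidableEq (Gf i)]

/-- The syllable length of an element of a free product (length of its normal form). -/
def syl (g : CoprodI Gf) : ℕ := (CoprodI.Word.equiv g).toList.length

/-- The index of the last syllable of the normal form of an element of a free product. -/
def lastSyl (g : CoprodI Gf) : Option ι :=
  ((CoprodI.Word.equiv g).toList.getLast?).map Sigma.fst

/-- A Kurosh system for a subgroup `H` of the free product `G = ∗_α G_α`: for each `α`, a
right transversal `t α` of `H\G` (recorded as a coset-constant map `G → G` picking the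
representative `α(Hg)` of `Hg`, with `α(H) = 1`) and a system `d α` of double coset
representatives of `H\G/G_α` (a double-coset-constant map picking `α(HgG_α)`), subject to
the axioms (i)–(v). -/
structure KuroshSystem (H : Subgroup (CoprodI Gf)) where
  t : ι → CoprodI Gf → CoprodI Gf
  d : ι → CoprodI Gf → CoprodI Gf
  /-- `t α g` represents the right coset `Hg` -/
  t_coset : ∀ α g, g * (t α g)⁻¹ ∈ H
  /-- `t α` is constant on right cosets -/
  t_const : ∀ α g h, h ∈ H → t α (h * g) = t α g
  /-- `α(H) = 1` -/
  t_one : ∀ α, ∀ h ∈ H, t α h = 1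
  /-- `d α g` lies in the double coset `HgG_α` -/
  d_coset : ∀ α g, ∃ h ∈ H, ∃ x : Gf α, d α g = h * g * CoprodI.of x
  /-- `d α` is constant on double cosets -/
  d_const : ∀ α g h (x : Gf α), h ∈ H → d α (h * g * CoprodI.of x) = d α g
  /-- (i) if `g = α(HgG_α)` then `g = α(Hg)` -/
  ax_i : ∀ α g, t α (d α g) = d α g
  /-- (ii) `α(HgG_α)` is `1` or ends in a syllable `β ≠ α` -/
  ax_ii : ∀ α g, d α g = 1 ∨ ∃ β, β ≠ α ∧ lastSyl Gf (d α g) = some β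
  /-- (iii) `H_i ⊆ HgG_α` with `g = α(HgG_α)` implies `α(H_i) ∈ gG_α` -/
  ax_iii : ∀ α g, ∀ h ∈ H, ∀ x : Gf α,
    ∃ x' : Gf α, t α (h * d α g * CoprodI.of x) = d α g * CoprodI.of x'
  /-- (iv) if `1 ≠ g = α(HgG_α)` has last syllable in `G_β` then `β(Hg) = g` -/
  ax_iv : ∀ α g β, d α g ≠ 1 → lastSyl Gf (d α g) = some β → t β (d α g) = d α g
  /-- (v) `α(HgG_α)` has minimal syllable length in its double coset -/
  ax_v : ∀ α g, syl Gf (d α g) ≤ syl Gf g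

/-!
That `y_{i,x}` lies in `H` uses only that `α(·)` picks coset representatives. Axiom (iii) puts
both `α(H_i)` and `α(H_i x)` into `uG_α`, so `y_{i,x}` is the conjugate by `u` of an element of
`G_α`. Conversely, if `h' = u c u⁻¹ ∈ H` with `c ∈ G_α`, then `H u c = H h' u = H u`, whose
representative is `u` by (i), so `y_{Hu,c} = u c u⁻¹ = h'`.
-/

namespace KuroshSystem

variable {Gf} {H : Subgroup (CoprodI Gf)} (ks : KuroshSystem Gf H)

-- The element `y_{i,x}` of the paper, for the coset `H_i = Hw`.
def y (α : ι) (w : CoprodI Gf) (x : Gf α) : CoprodI Gf :=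
  ks.t α w * CoprodI.of x * (ks.t α (w * CoprodI.of x))⁻¹

theorem y_mem (α : ι) (w : CoprodI Gf) (x : Gf α) : ks.y α w x ∈ H := by
  have hsplit : ks.y α w x = (w * (ks.t α w)⁻¹)⁻¹ *
      (w * CoprodI.of x * (ks.t α (w * CoprodI.of x))⁻¹) := by
    simp only [y]; group
  rw [hsplit]
  exact mul_mem (inv_mem (ks.t_coset α w)) (ks.t_coset α _)

theorem exists_y_eq_conj (α : ι) (g : CoprodI Gf) {h : CoprodI Gf} (hh : h ∈ H)
    (x₀ x : Gf α) :
    ∃ c : Gf α, ks.y α (h * ks.d α g * CoprodI.of x₀) x =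
      ks.d α g * CoprodI.of c * (ks.d α g)⁻¹ := by
  obtain ⟨x₀', hx₀'⟩ := ks.ax_iii α g h hh x₀
  obtain ⟨x₁', hx₁'⟩ := ks.ax_iii α g h hh (x₀ * x)
  refine ⟨x₀' * x * x₁'⁻¹, ?_⟩
  rw [y, mul_assoc _ (CoprodI.of x₀), ← map_mul, hx₀', hx₁']
  simp only [map_mul, map_inv]
  group

theorem t_d_mul_of_eq {α : ι} {g : CoprodI Gf} {c : Gf α}
    (hc : ks.d α g * CoprodI.of c * (ks.d α g)⁻¹ ∈ H) :
    ks.t α (ks.d α g * CoprodI.of c) = ks.d α g := by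
  have hcoset : ks.d α g * CoprodI.of c =
      ks.d α g * CoprodI.of c * (ks.d α g)⁻¹ * ks.d α g := by group
  rw [hcoset, ks.t_const α _ _ hc, ks.ax_i]

theorem y_d_eq_conj {α : ι} {g : CoprodI Gf} {c : Gf α}
    (hc : ks.d α g * CoprodI.of c * (ks.d α g)⁻¹ ∈ H) :
    ks.y α (ks.d α g) c = ks.d α g * CoprodI.of c * (ks.d α g)⁻¹ := by
  rw [y, ks.ax_i, ks.t_d_mul_of_eq hc]

end KuroshSystem

/-- for a Kurosh system, if `x ∈ G_α` and `H_i ⊆ HuG_α` where `u = α(HuG_α)`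
(so `H_i` is the coset of `w = h·u·x₀` with `h ∈ H`, `x₀ ∈ G_α`), then
`y_{i,x} = α(H_i)·x·α(H_i x)⁻¹ ∈ uG_αu⁻¹ ∩ H`; conversely every `h' ∈ uG_αu⁻¹ ∩ H` is of
the form `y_{Hu,x}` for some `x ∈ G_α`. -/
theorem kurosh_y_conjugate {ι : Type} [DecidableEq ι] (Gf : ι → Type) [∀ i, Group (Gf i)]
    [∀ i, DecidableEq (Gf i)] (H : Subgroup (CoprodI Gf)) (ks : KuroshSystem Gf H)
    (α : ι) (g : CoprodI Gf) :
    (∀ h ∈ H, ∀ x₀ x : Gf α,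
      ks.t α (h * ks.d α g * CoprodI.of x₀) * CoprodI.of x *
          (ks.t α (h * ks.d α g * CoprodI.of x₀ * CoprodI.of x))⁻¹ ∈ H ∧
        ∃ c : Gf α,
          ks.t α (h * ks.d α g * CoprodI.of x₀) * CoprodI.of x *
              (ks.t α (h * ks.d α g * CoprodI.of x₀ * CoprodI.of x))⁻¹ =
            ks.d α g * CoprodI.of c * (ks.d α g)⁻¹) ∧
    (∀ h' ∈ H, (∃ c : Gf α, h' = ks.d α g * CoprodI.of c * (ks.d α g)⁻¹) →
      ∃ x : Gf α,
        h' = ks.t α (ks.d α g) * CoprodI.of x *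
          (ks.t α (ks.d α g * CoprodI.of x))⁻¹) := by
  refine ⟨fun h hh x₀ x => ⟨ks.y_mem α _ x, ks.exists_y_eq_conj α g hh x₀ x⟩, ?_⟩
  rintro _ hH ⟨c, rfl⟩
  exact ⟨c, (ks.y_d_eq_conj hH).symm⟩
end

section
/- Let G = ∗_{α∈A} G_α be a free product and H ≤ G. Then a Kurosh system for H in G exists: there are transversals T_α of H\G and systems D_α of double coset representatives of H\G/G_α satisfying axioms (i)–(v) of a Kurosh system. -/
open Monoid

variable {ι : Type} [DecidableEq ι] (Gf : ι → Type) [∀ i, Group (Gf i)]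
  [∀ i, DecidableEq (Gf i)]

/-!
The representatives `α(HgG_α)` are built by induction on the minimal syllable length `n` of
`HgG_α`. A shortest element `u` of `HgG_α` ends in a syllable from some `G_β` with `β ≠ α`
(otherwise dropping that syllable would shorten it), and `HuG_β` has minimal length `n - 1`, so
its representative `w` is already defined. Then `α(HgG_α)` is taken in `Hu ∩ wG_β`: it has
length `n` and ends in `G_β`. Such a representative `s` ending in `G_β` is recovered from its
right coset as the chosen element of `Hs ∩ β(HsG_β)G_β`, so each right coset contains at most one
of them. The transversal `α(Hg)` is that representative ending in `G_α` if `Hg` contains one,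
and otherwise an element of `Hg ∩ α(HgG_α)G_α`.
-/

open Monoid.CoprodI

section Syllables

variable {Gf}

@[simp]
theorem syl_one : syl Gf 1 = 0 := by
  simp [syl, Word.equiv]

@[simp]
theorem lastSyl_one : lastSyl Gf 1 = none := by
  simp [lastSyl, Word.equiv]

theorem syl_eq_zero_iff {g : CoprodI Gf} : syl Gf g = 0 ↔ g = 1 := by
  refine ⟨fun h => ?_, fun h => h ▸ syl_one⟩
  have hw : Word.equiv g = Word.empty := Word.ext (List.length_eq_zero_iff.1 h)
  exact Word.equiv.injective (hw.trans (by simp [Word.equiv]))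

theorem exists_lastSyl_eq_some {g : CoprodI Gf} (h : g ≠ 1) : ∃ β, lastSyl Gf g = some β := by
  obtain ⟨a, ha⟩ := Option.isSome_iff_exists.1 <| List.getLast?_isSome.2 <|
    List.length_pos_iff.1 <| Nat.pos_of_ne_zero (mt syl_eq_zero_iff.1 h)
  exact ⟨a.1, by simp [lastSyl, ha]⟩

theorem Monoid.CoprodI.Word.equiv_prod (w : Word Gf) : Word.equiv w.prod = w :=
  Word.equiv.apply_symm_apply w

theorem toList_equiv_mul_of {g : CoprodI Gf} {α : ι} {x : Gf α} (hx : x ≠ 1)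
    (hl : lastSyl Gf g ≠ some α) :
    (Word.equiv (g * of x)).toList = (Word.equiv g).toList ++ [⟨α, x⟩] := by
  set w := Word.equiv g with hw
  let w' : Word Gf :=
    { toList := w.toList ++ [⟨α, x⟩]
      ne_one := by
        simpa [or_imp, forall_and] using And.intro w.ne_one hx
      chain_ne := by
        refine w.chain_ne.append (List.isChain_singleton _) fun p hp q hq => ?_
        obtain rfl : q = ⟨α, x⟩ := by simpa using hq.symm
        rintro rfl
        exact hl (by simp [lastSyl, ← hw, Option.mem_def.1 hp]) }
  have hprod : w'.prod = g * of x := by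
    simp only [w', Word.prod, List.map_append, List.prod_append, List.map_singleton,
      List.prod_singleton]
    exact congrArg (· * of x) (Word.equiv.symm_apply_apply g)
  rw [← hprod]
  exact congrArg Word.toList (Word.equiv_prod w')

theorem syl_mul_of {g : CoprodI Gf} {α : ι} {x : Gf α} (hx : x ≠ 1)
    (hl : lastSyl Gf g ≠ some α) : syl Gf (g * of x) = syl Gf g + 1 := by
  simp [syl, toList_equiv_mul_of hx hl]

theorem lastSyl_mul_of {g : CoprodI Gf} {α : ι} {x : Gf α} (hx : x ≠ 1)
    (hl : lastSyl Gf g ≠ some α) : lastSyl Gf (g * of x) = some α := by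
  simp [lastSyl, toList_equiv_mul_of hx hl]

theorem exists_eq_mul_of_of_lastSyl_eq {g : CoprodI Gf} {α : ι} (h : lastSyl Gf g = some α) :
    ∃ (g' : CoprodI Gf) (x : Gf α), x ≠ 1 ∧ lastSyl Gf g' ≠ some α ∧ g = g' * of x := by
  set w := Word.equiv g
  obtain ⟨⟨β, x⟩, hlast, rfl⟩ := Option.map_eq_some_iff.1 h
  obtain ⟨L, hL⟩ : ∃ L, w.toList = L ++ [⟨β, x⟩] :=
    ⟨_, (List.dropLast_append_getLast? _ hlast).symm⟩
  have hchain := w.chain_ne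
  rw [hL, List.isChain_append] at hchain
  obtain ⟨hch, -, hrel⟩ := hchain
  let w' : Word Gf := ⟨L, fun l hl => w.ne_one l (hL ▸ List.mem_append_left _ hl), hch⟩
  refine ⟨w'.prod, x, w.ne_one ⟨β, x⟩ (by simp [hL]), fun hc => ?_, ?_⟩
  · rw [lastSyl, Word.equiv_prod] at hc
    obtain ⟨p, hp, hpβ⟩ := Option.map_eq_some_iff.1 hc
    exact hrel p hp _ rfl hpβ
  · rw [← Word.equiv.symm_apply_apply g]
    show Word.prod w = _
    simp only [Word.prod, hL, List.map_append, List.prod_append, List.map_singleton,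
      List.prod_singleton, w']

theorem syl_mul_of_le (g : CoprodI Gf) {α : ι} (x : Gf α) :
    syl Gf (g * of x) ≤ syl Gf g + 1 := by
  by_cases hx : x = 1
  · simp [hx]
  by_cases hl : lastSyl Gf g = some α
  · obtain ⟨g', y, hy, hl', rfl⟩ := exists_eq_mul_of_of_lastSyl_eq hl
    rw [mul_assoc, ← map_mul, syl_mul_of hy hl']
    by_cases hyx : y * x = 1
    · rw [hyx, map_one, mul_one]
      omega
    · rw [syl_mul_of hyx hl']
      omega
  · rw [syl_mul_of hx hl]

end Syllables

open MulOpposite Pointwise DoubleCoset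

set_option linter.unusedSectionVars false

theorem rightCoset_subset_doubleCoset {G : Type*} [Group G] (H K : Subgroup G) (g : G) :
    op g • (H : Set G) ⊆ doubleCoset g H K := fun v hv =>
  mem_doubleCoset.2 ⟨v * g⁻¹, (mem_rightCoset_iff g).1 hv, 1, K.one_mem, by group⟩

theorem rightCoset_eq_of_mem {G : Type*} [Group G] {H : Subgroup G} {g v : G}
    (hv : v ∈ op g • (H : Set G)) : op v • (H : Set G) = op g • H :=
  (rightCoset_eq_iff H).2 <| by simpa using H.inv_mem ((mem_rightCoset_iff g).1 hv)

namespace Kurosh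

variable {Gf} (H : Subgroup (CoprodI Gf))

abbrev dcoset (α : ι) (g : CoprodI Gf) : Set (CoprodI Gf) :=
  doubleCoset g H (of : Gf α →* CoprodI Gf).range

variable {H} in
theorem mem_dcoset {α : ι} {g v : CoprodI Gf} :
    v ∈ dcoset H α g ↔ ∃ h ∈ H, ∃ x : Gf α, v = h * g * of x := by
  simp [mem_doubleCoset]

noncomputable def shortestRep (α : ι) (g : CoprodI Gf) : CoprodI Gf :=
  Function.argminOn (syl Gf) (dcoset H α g) ⟨g, mem_doubleCoset_self _ _ g⟩

noncomputable def minSyl (α : ι) (g : CoprodI Gf) : ℕ := syl Gf (shortestRep H α g)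

theorem shortestRep_mem (α : ι) (g : CoprodI Gf) : shortestRep H α g ∈ dcoset H α g :=
  Function.argminOn_mem _ _ _

variable {H}

theorem minSyl_le {α : ι} {g v : CoprodI Gf} (hv : v ∈ dcoset H α g) :
    minSyl H α g ≤ syl Gf v :=
  Function.argminOn_le _ _ hv

theorem shortestRep_eq_of_mem {α : ι} {g v : CoprodI Gf} (hv : v ∈ dcoset H α g) :
    shortestRep H α v = shortestRep H α g := by
  unfold shortestRep
  congr 1
  exact doubleCoset_eq_of_mem hv

theorem mul_of_mem_dcoset {α : ι} {g v : CoprodI Gf} (hv : v ∈ dcoset H α g) (x : Gf α) :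
    v * of x ∈ dcoset H α g := by
  obtain ⟨h, hh, y, rfl⟩ := mem_dcoset.1 hv
  exact mem_dcoset.2 ⟨h, hh, y * x, by rw [map_mul, mul_assoc]⟩

theorem mul_mem_dcoset {α : ι} {g v h : CoprodI Gf} (hh : h ∈ H) (hv : v ∈ dcoset H α g) :
    h * v ∈ dcoset H α g := by
  obtain ⟨h', hh', y, rfl⟩ := mem_dcoset.1 hv
  exact mem_dcoset.2 ⟨h * h', H.mul_mem hh hh', y, by simp only [mul_assoc]⟩

theorem minSyl_eq_of_mem {α : ι} {g v : CoprodI Gf} (hv : v ∈ dcoset H α g) :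
    minSyl H α v = minSyl H α g := by
  rw [minSyl, minSyl, shortestRep_eq_of_mem hv]

theorem lastSyl_shortestRep_ne (α : ι) (g : CoprodI Gf) :
    lastSyl Gf (shortestRep H α g) ≠ some α := by
  intro h
  obtain ⟨u', x, hx, hu', hu⟩ := exists_eq_mul_of_of_lastSyl_eq h
  have hmem : u' ∈ dcoset H α g := by
    simpa [hu] using mul_of_mem_dcoset (shortestRep_mem H α g) x⁻¹
  have := minSyl_le hmem
  rw [minSyl, hu, syl_mul_of hx hu'] at this
  omega

theorem minSyl_le_minSyl_add_one {α : ι} {g u : CoprodI Gf} (hu : u ∈ dcoset H α g) (β : ι) :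
    minSyl H α g ≤ minSyl H β u + 1 := by
  obtain ⟨h, hh, y, hv⟩ := mem_dcoset.1 (shortestRep_mem H β u)
  have hhu : h * u = shortestRep H β u * of y⁻¹ := by rw [hv, map_inv, mul_inv_cancel_right]
  calc minSyl H α g ≤ syl Gf (h * u) := minSyl_le (mul_mem_dcoset hh hu)
    _ ≤ minSyl H β u + 1 := hhu ▸ syl_mul_of_le _ _

theorem minSyl_shortestRep {α β : ι} {g : CoprodI Gf} {n : ℕ} (hg : minSyl H α g = n + 1)
    (hβ : lastSyl Gf (shortestRep H α g) = some β) : minSyl H β (shortestRep H α g) = n := by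
  obtain ⟨u', x, hx, hu', hu⟩ := exists_eq_mul_of_of_lastSyl_eq hβ
  have hmem : u' ∈ dcoset H β (shortestRep H α g) := by
    simpa [hu] using mul_of_mem_dcoset (mem_doubleCoset_self _ _ (shortestRep H α g)) x⁻¹
  have hle := minSyl_le hmem
  have hge := minSyl_le_minSyl_add_one (shortestRep_mem H α g) β
  have hsyl : syl Gf u' + 1 = n + 1 := by rw [← syl_mul_of hx hu', ← hu]; exact hg
  omega

variable (H) in
open Classical in
noncomputable def cosetRep (β : ι) (w g : CoprodI Gf) : CoprodI Gf :=
  if w ∈ op g • (H : Set _) then w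
  else Classical.epsilon fun v => v ∈ op g • (H : Set _) ∧ ∃ x : Gf β, v = w * of x

theorem cosetRep_of_mem {β : ι} {w g : CoprodI Gf} (hw : w ∈ op g • (H : Set _)) :
    cosetRep H β w g = w :=
  if_pos hw

theorem cosetRep_spec {β : ι} {w g : CoprodI Gf} (hw : w ∈ dcoset H β g) :
    cosetRep H β w g ∈ op g • (H : Set _) ∧ ∃ x : Gf β, cosetRep H β w g = w * of x := by
  unfold cosetRep
  split_ifs with hwg
  · exact ⟨hwg, 1, by simp⟩
  · obtain ⟨h, hh, x, rfl⟩ := mem_dcoset.1 hw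
    have : ∃ v ∈ op g • (H : Set _), ∃ y : Gf β, v = h * g * of x * of y :=
      ⟨h * g, by simpa [mem_rightCoset_iff] using hh, x⁻¹, by simp⟩
    exact Classical.epsilon_spec this

theorem cosetRep_congr {β : ι} {w g v : CoprodI Gf} (hv : v ∈ op g • (H : Set _)) :
    cosetRep H β w v = cosetRep H β w g := by
  rw [cosetRep, cosetRep, rightCoset_eq_of_mem hv]

variable (H) in
/-- `repAux H n α g` is the representative `α(HgG_α)` provided `n` is the minimal syllable
length in `HgG_α`. -/
noncomputable def repAux : ℕ → ι → CoprodI Gf → CoprodI Gf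
  | 0, _, _ => 1
  | n + 1, α, g =>
    match lastSyl Gf (shortestRep H α g) with
    | none => 1
    | some β => cosetRep H β (repAux n β (shortestRep H α g)) (shortestRep H α g)

variable (H) in
noncomputable def doubleRep (α : ι) (g : CoprodI Gf) : CoprodI Gf :=
  repAux H (minSyl H α g) α g

theorem doubleRep_eq_of_mem {α : ι} {g v : CoprodI Gf} (hv : v ∈ dcoset H α g) :
    doubleRep H α v = doubleRep H α g := by
  rw [doubleRep, doubleRep, minSyl_eq_of_mem hv]
  cases minSyl H α g with
  | zero => rfl
  | succ n => simp only [repAux, shortestRep_eq_of_mem hv]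

theorem doubleRep_eq_cosetRep {α β : ι} {g : CoprodI Gf} {n : ℕ} (hg : minSyl H α g = n + 1)
    (hβ : lastSyl Gf (shortestRep H α g) = some β) :
    doubleRep H α g =
      cosetRep H β (doubleRep H β (shortestRep H α g)) (shortestRep H α g) := by
  rw [doubleRep, hg, doubleRep, minSyl_shortestRep hg hβ]
  simp only [repAux, hβ]

variable (H) in
def IsKuroshRep (α : ι) (g d : CoprodI Gf) : Prop :=
  d ∈ dcoset H α g ∧ syl Gf d = minSyl H α g ∧
    (d = 1 ∨ ∃ β ≠ α, lastSyl Gf d = some β ∧ d = cosetRep H β (doubleRep H β d) d)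

theorem IsKuroshRep.lastSyl_ne {α : ι} {g d : CoprodI Gf} (h : IsKuroshRep H α g d) :
    lastSyl Gf d ≠ some α := by
  rcases h.2.2 with rfl | ⟨β, hβα, hβ, -⟩
  · simp
  · simpa [hβ] using hβα

theorem isKuroshRep_doubleRep_succ {n : ℕ}
    (ih : ∀ β u, minSyl H β u = n → IsKuroshRep H β u (doubleRep H β u)) {α : ι}
    {g : CoprodI Gf} (hg : minSyl H α g = n + 1) : IsKuroshRep H α g (doubleRep H α g) := by
  set u := shortestRep H α g
  have hu : syl Gf u = n + 1 := hg
  obtain ⟨β, hβ⟩ := exists_lastSyl_eq_some (mt syl_eq_zero_iff.2 (by omega) : u ≠ 1)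
  have hβα : β ≠ α := by
    rintro rfl
    exact lastSyl_shortestRep_ne β g hβ
  have hmin := minSyl_shortestRep hg hβ
  have hw := ih β u hmin
  set w := doubleRep H β u
  have hsw : syl Gf w = n := hw.2.1.trans hmin
  obtain ⟨hs, x, hsx⟩ := cosetRep_spec (H := H) hw.1
  have hcoset : op u • (H : Set _) ⊆ dcoset H α g :=
    (rightCoset_subset_doubleCoset H _ u).trans
      (doubleCoset_eq_of_mem (shortestRep_mem H α g)).subset
  -- `w` is shorter than every element of `Hu ⊆ HgG_α`, so `w ∉ Hu`
  have hx : x ≠ 1 := by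
    rintro rfl
    rw [map_one, mul_one] at hsx
    have := minSyl_le (hcoset (hsx ▸ hs))
    omega
  rw [doubleRep_eq_cosetRep hg hβ]
  refine ⟨hcoset hs, ?_, Or.inr ⟨β, hβα, ?_, ?_⟩⟩
  · rw [hsx, syl_mul_of hx hw.lastSyl_ne, hsw, hg]
  · rw [hsx]
    exact lastSyl_mul_of hx hw.lastSyl_ne
  · rw [doubleRep_eq_of_mem (rightCoset_subset_doubleCoset H _ u hs), cosetRep_congr hs]

theorem isKuroshRep_doubleRep (α : ι) (g : CoprodI Gf) :
    IsKuroshRep H α g (doubleRep H α g) := by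
  suffices ∀ n α g, minSyl H α g = n → IsKuroshRep H α g (doubleRep H α g) from
    this _ α g rfl
  intro n
  induction n with
  | zero =>
    intro α g hg
    have hd : doubleRep H α g = 1 := by rw [doubleRep, hg]; rfl
    rw [hd]
    exact ⟨syl_eq_zero_iff.1 hg ▸ shortestRep_mem H α g, by rw [syl_one, hg], Or.inl rfl⟩
  | succ n ih => exact fun α g => isKuroshRep_doubleRep_succ ih

variable (H) in
theorem doubleRep_mem (α : ι) (g : CoprodI Gf) : doubleRep H α g ∈ dcoset H α g :=
  (isKuroshRep_doubleRep α g).1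

theorem syl_doubleRep (α : ι) (g : CoprodI Gf) : syl Gf (doubleRep H α g) = minSyl H α g :=
  (isKuroshRep_doubleRep α g).2.1

theorem doubleRep_doubleRep (α : ι) (g : CoprodI Gf) :
    doubleRep H α (doubleRep H α g) = doubleRep H α g :=
  doubleRep_eq_of_mem (doubleRep_mem H α g)

theorem doubleRep_mul_of {α : ι} {g h : CoprodI Gf} (hh : h ∈ H) (x : Gf α) :
    doubleRep H α (h * g * of x) = doubleRep H α g :=
  doubleRep_eq_of_mem (mem_dcoset.2 ⟨h, hh, x, rfl⟩)

theorem syl_doubleRep_le {α : ι} {g v : CoprodI Gf}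
    (hv : v ∈ op (doubleRep H α g) • (H : Set _)) : syl Gf (doubleRep H α g) ≤ syl Gf v := by
  rw [syl_doubleRep]
  exact minSyl_le <| (doubleCoset_eq_of_mem (doubleRep_mem H α g)).subset <|
    rightCoset_subset_doubleCoset H _ _ hv

variable (H) in
def repsEndingIn (β : ι) : Set (CoprodI Gf) :=
  {s | s ≠ 1 ∧ lastSyl Gf s = some β ∧ ∃ γ g, s = doubleRep H γ g}

theorem syl_le_of_mem_repsEndingIn {β : ι} {s v : CoprodI Gf} (hs : s ∈ repsEndingIn H β)
    (hv : v ∈ op s • (H : Set _)) : syl Gf s ≤ syl Gf v := by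
  obtain ⟨-, -, γ, g, rfl⟩ := hs
  exact syl_doubleRep_le hv

theorem eq_cosetRep_of_mem_repsEndingIn {β : ι} {s : CoprodI Gf} (hs : s ∈ repsEndingIn H β) :
    s = cosetRep H β (doubleRep H β s) s := by
  obtain ⟨hs1, hsβ, γ, g, rfl⟩ := hs
  obtain ⟨β', -, hβ', h⟩ := (isKuroshRep_doubleRep γ g).2.2.resolve_left hs1
  obtain rfl : β' = β := Option.some_injective _ (hβ'.symm.trans hsβ)
  exact h

theorem exists_eq_doubleRep_mul_of {β : ι} {s : CoprodI Gf} (hs : s ∈ repsEndingIn H β) :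
    ∃ y : Gf β, y ≠ 1 ∧ s = doubleRep H β s * of y := by
  obtain ⟨y, hy⟩ := (cosetRep_spec (doubleRep_mem H β s)).2
  rw [← eq_cosetRep_of_mem_repsEndingIn hs] at hy
  refine ⟨y, ?_, hy⟩
  rintro rfl
  rw [map_one, mul_one] at hy
  exact (isKuroshRep_doubleRep β s).lastSyl_ne (hy ▸ hs.2.1)

theorem eq_of_mem_repsEndingIn {β : ι} {s₁ s₂ : CoprodI Gf} (h₁ : s₁ ∈ repsEndingIn H β)
    (h₂ : s₂ ∈ repsEndingIn H β) (h : s₂ ∈ op s₁ • (H : Set _)) : s₂ = s₁ :=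
  calc s₂ = cosetRep H β (doubleRep H β s₂) s₂ := eq_cosetRep_of_mem_repsEndingIn h₂
    _ = cosetRep H β (doubleRep H β s₁) s₁ := by
      rw [doubleRep_eq_of_mem (rightCoset_subset_doubleCoset H _ _ h), cosetRep_congr h]
    _ = s₁ := (eq_cosetRep_of_mem_repsEndingIn h₁).symm

variable (H) in
open Classical in
noncomputable def rightRep (α : ι) (g : CoprodI Gf) : CoprodI Gf :=
  if ∃ s ∈ op g • (H : Set _), s ∈ repsEndingIn H α then
    Classical.epsilon fun s => s ∈ op g • (H : Set _) ∧ s ∈ repsEndingIn H α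
  else cosetRep H α (doubleRep H α g) g

theorem rightRep_spec_of_exists {α : ι} {g : CoprodI Gf}
    (h : ∃ s ∈ op g • (H : Set _), s ∈ repsEndingIn H α) :
    rightRep H α g ∈ op g • (H : Set _) ∧ rightRep H α g ∈ repsEndingIn H α := by
  rw [rightRep, if_pos h]
  exact Classical.epsilon_spec h

theorem rightRep_of_not_exists {α : ι} {g : CoprodI Gf}
    (h : ¬∃ s ∈ op g • (H : Set _), s ∈ repsEndingIn H α) :
    rightRep H α g = cosetRep H α (doubleRep H α g) g :=
  if_neg h

theorem rightRep_mem (α : ι) (g : CoprodI Gf) : rightRep H α g ∈ op g • (H : Set _) := by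
  by_cases h : ∃ s ∈ op g • (H : Set _), s ∈ repsEndingIn H α
  · exact (rightRep_spec_of_exists h).1
  · rw [rightRep_of_not_exists h]
    exact (cosetRep_spec (doubleRep_mem H α g)).1

theorem rightRep_eq_of_mem {α : ι} {g v : CoprodI Gf} (hv : v ∈ op g • (H : Set _)) :
    rightRep H α v = rightRep H α g := by
  rw [rightRep, rightRep, rightCoset_eq_of_mem hv,
    doubleRep_eq_of_mem (rightCoset_subset_doubleCoset H _ _ hv), cosetRep_congr hv]

theorem rightRep_of_mem_repsEndingIn {α : ι} {s : CoprodI Gf} (hs : s ∈ repsEndingIn H α) :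
    rightRep H α s = s :=
  have h := rightRep_spec_of_exists ⟨s, mem_own_rightCoset H.toSubmonoid s, hs⟩
  eq_of_mem_repsEndingIn hs h.2 h.1

theorem rightRep_doubleRep (α : ι) (g : CoprodI Gf) :
    rightRep H α (doubleRep H α g) = doubleRep H α g := by
  rw [rightRep_of_not_exists, doubleRep_doubleRep,
    cosetRep_of_mem (mem_own_rightCoset H.toSubmonoid _)]
  rintro ⟨s, hs, hsα⟩
  obtain ⟨y, hy, hsy⟩ := exists_eq_doubleRep_mul_of hsα
  rw [doubleRep_eq_of_mem (rightCoset_subset_doubleCoset H _ _ hs), doubleRep_doubleRep] at hsy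
  have hlong : syl Gf s = syl Gf (doubleRep H α g) + 1 := by
    rw [hsy]
    exact syl_mul_of hy (isKuroshRep_doubleRep α g).lastSyl_ne
  have hshort : syl Gf s ≤ syl Gf (doubleRep H α g) := by
    refine syl_le_of_mem_repsEndingIn hsα ?_
    rw [rightCoset_eq_of_mem hs]
    exact mem_own_rightCoset H.toSubmonoid _
  omega

theorem rightRep_of_mem {α : ι} {g : CoprodI Gf} (hg : g ∈ H) : rightRep H α g = 1 := by
  have hd : doubleRep H α g = 1 := by
    refine syl_eq_zero_iff.1 (Nat.le_zero.1 ?_)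
    rw [syl_doubleRep]
    simpa using minSyl_le (v := 1) (mem_dcoset.2 ⟨g⁻¹, H.inv_mem hg, 1, by simp⟩)
  have hg' : g ∈ op (doubleRep H α g) • (H : Set _) := by
    simpa [hd, mem_rightCoset_iff] using hg
  rw [rightRep_eq_of_mem hg', rightRep_doubleRep, hd]

theorem exists_rightRep_eq_doubleRep_mul_of (α : ι) (g : CoprodI Gf) :
    ∃ x : Gf α, rightRep H α g = doubleRep H α g * of x := by
  by_cases h : ∃ s ∈ op g • (H : Set _), s ∈ repsEndingIn H α
  · obtain ⟨hs, hsα⟩ := rightRep_spec_of_exists h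
    obtain ⟨y, -, hy⟩ := exists_eq_doubleRep_mul_of hsα
    rw [doubleRep_eq_of_mem (rightCoset_subset_doubleCoset H _ _ hs)] at hy
    exact ⟨y, hy⟩
  · rw [rightRep_of_not_exists h]
    exact (cosetRep_spec (doubleRep_mem H α g)).2

end Kurosh

open Kurosh in
/-- Kurosh systems exist for any subgroup of a free product. -/
theorem kurosh_system_exists {ι : Type} [DecidableEq ι] (Gf : ι → Type) [∀ i, Group (Gf i)]
    [∀ i, DecidableEq (Gf i)] (H : Subgroup (CoprodI Gf)) :
    Nonempty (KuroshSystem Gf H) := by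
  refine ⟨{
    t := rightRep H
    d := doubleRep H
    t_coset := fun α g => ?_
    t_const := fun α g h hh => rightRep_eq_of_mem ?_
    t_one := fun α h hh => rightRep_of_mem hh
    d_coset := fun α g => mem_dcoset.1 (doubleRep_mem H α g)
    d_const := fun α g h x hh => doubleRep_mul_of hh x
    ax_i := rightRep_doubleRep
    ax_ii := fun α g => ?_
    ax_iii := fun α g h hh x => ?_
    ax_iv := fun α g β hne hβ => rightRep_of_mem_repsEndingIn ⟨hne, hβ, α, g, rfl⟩
    ax_v := fun α g => ?_ }⟩
  · simpa using H.inv_mem ((mem_rightCoset_iff g).1 (rightRep_mem α g))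
  · simpa [mem_rightCoset_iff] using hh
  · obtain hd | ⟨β, hβα, hβ, -⟩ := (isKuroshRep_doubleRep (H := H) α g).2.2
    · exact Or.inl hd
    · exact Or.inr ⟨β, hβα, hβ⟩
  · obtain ⟨x', hx'⟩ := exists_rightRep_eq_doubleRep_mul_of α (h * doubleRep H α g * of x)
    rw [doubleRep_mul_of hh, doubleRep_doubleRep] at hx'
    exact ⟨x', hx'⟩
  · rw [syl_doubleRep]
    exact minSyl_le (DoubleCoset.mem_doubleCoset_self _ _ g)
end
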